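/- There is a universal constant C₀ ≥ 1 such that the following holds for all integers d,k,μ ≥ 1 and all ε > 0: for every (μ,ε)-curve P of complexity at most k in ℝ^d and every Δ > 0, there exists a set 𝒟 of (μ,ε)-curves of complexity at most k in ℝ^d with |𝒟| ≤ (C₀^d · k · μ)^k such that every (μ,ε)-curve Q of complexity at most k with d_F(P,Q) ≤ Δ satisfies d_F(Q,Q*) ≤ Δ/2 for some Q* ∈ 𝒟. (Hence the doubling constant of the space of (μ,ε)-curves of complexity at most k in ℝ^d under the Fréchet distance is at most (C₀^d·k·μ)^k, and its doubling dimension is O(k(d + log(kμ))).) -/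

import Mathlib

open Set Metric Function

noncomputable section

/-- Euclidean space ℝ^d. -/
abbrev Euc (d : ℕ) := EuclideanSpace ℝ (Fin d)

/-- The polygonal curve (parametrized over `[0,1]`) obtained by concatenating the
segments between consecutive vertices `p 0, p 1, …, p n`. -/
def curveMap {d n : ℕ} (p : Fin (n + 1) → Euc d) (t : ℝ) : Euc d :=
  if h : n = 0 then p 0
  else
    (1 - (t * n - (min ⌊t * (n : ℝ)⌋₊ (n - 1) : ℕ))) • p ⟨min ⌊t * (n : ℝ)⌋₊ (n - 1), by omega⟩
      + (t * n - (min ⌊t * (n : ℝ)⌋₊ (n - 1) : ℕ)) • p ⟨min ⌊t * (n : ℝ)⌋₊ (n - 1) + 1, by omega⟩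

/-- A reparametrization: a continuous non-decreasing surjection of `[0,1]` onto itself. -/
def IsRepar (f : ℝ → ℝ) : Prop :=
  ContinuousOn f (Icc 0 1) ∧ MonotoneOn f (Icc 0 1) ∧ f '' Icc 0 1 = Icc 0 1

/-- The (continuous) Fréchet distance between two curves `[0,1] → ℝ^d`. -/
def frechetDist {d : ℕ} (P Q : ℝ → Euc d) : ℝ :=
  sInf { r : ℝ | ∃ f g : ℝ → ℝ, IsRepar f ∧ IsRepar g ∧
    ∀ t ∈ Icc (0 : ℝ) 1, dist (P (f t)) (Q (g t)) ≤ r }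

/-- The edge (segment curve) from `a` to `b`, parametrized over `[0,1]`. -/
def seg {d : ℕ} (a b : Euc d) (t : ℝ) : Euc d := (1 - t) • a + t • b

/-- The subcurve `P[s,t]` of `P`, reparametrized over `[0,1]`. -/
def subcurve {d : ℕ} (P : ℝ → Euc d) (s t : ℝ) (u : ℝ) : Euc d := P (s + u * (t - s))

/-- All edge lengths of the polygonal curve with vertices `p` are at most `Λ`. -/
def EdgeLenLe {d n : ℕ} (p : Fin (n + 1) → Euc d) (Λ : ℝ) : Prop :=
  ∀ i : Fin n, dist (p i.castSucc) (p i.succ) ≤ Λ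

/-- The vertices `p` define a `(μ,ε)`-curve: each edge length is a non-negative integer
multiple of `ε` and is at most `μ·ε`. -/
def IsMuEpsEdges {d n : ℕ} (p : Fin (n + 1) → Euc d) (μ : ℕ) (ε : ℝ) : Prop :=
  ∀ i : Fin n, (∃ m : ℕ, dist (p i.castSucc) (p i.succ) = m * ε) ∧
    dist (p i.castSucc) (p i.succ) ≤ μ * ε

/-- The `Δ`-neighbourhood of a set `A ⊆ ℝ^d`. -/
def nbhd {d : ℕ} (A : Set (Euc d)) (Δ : ℝ) : Set (Euc d) :=
  { x | ∃ a ∈ A, dist x a ≤ Δ }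


/-!
Fix a matching of `P` with a nearby curve `R` of leash length `2Δ`, and pair each vertex of `R`
with the point of `P` matched with it, its anchor. The code of `R` records, for each vertex, three
pieces of data of bounded size: the length of the next edge as a multiple of `ε` (`μ + 1`
choices); the window of arclength `Δ/4` along `P` containing its anchor, recorded relative to the
previous anchor and the edge length, which is possible because the arclength between consecutive
anchors differs from the edge length by at most `4nΔ` (`O(k)` choices); and the offset of the
vertex from its anchor, rounded to a `Δ/8`-net of the ball of radius `2Δ` (at most `625^d` points,
by a packing argument). Two curves with the same data have corresponding vertices within `Δ/2`,
hence are within Fréchet distance `Δ/2`, and there are at most `(2^(17d)·k·μ)^k` such codes.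
-/

section Polygonal

variable {d n m : ℕ}

def edgeLength (p : Fin (n + 1) → Euc d) (j : ℕ) : ℝ :=
  if h : j < n then dist (p ⟨j, by omega⟩) (p ⟨j + 1, by omega⟩) else 0

/-- The arclength of `curveMap p` on `[0, t]`, written with the same edge index as `curveMap`
so that the two unfold together. -/
def arclength (p : Fin (n + 1) → Euc d) (t : ℝ) : ℝ :=
  if n = 0 then 0
  else ∑ j ∈ Finset.range (min ⌊t * n⌋₊ (n - 1)), edgeLength p j
    + (t * n - (min ⌊t * n⌋₊ (n - 1) : ℕ)) * edgeLength p (min ⌊t * n⌋₊ (n - 1))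

lemma min_floor_eq_of_mem_edge {q : ℕ} (hq : q < n) {t : ℝ} (h₁ : q / n ≤ t)
    (h₂ : t ≤ (q + 1) / n) :
    min ⌊t * n⌋₊ (n - 1) = q ∨ (min ⌊t * n⌋₊ (n - 1) = q + 1 ∧ t * n = q + 1) := by
  have hn : (0 : ℝ) < n := by exact_mod_cast (show 0 < n by omega)
  rw [div_le_iff₀ hn] at h₁
  rw [le_div_iff₀ hn] at h₂
  rcases h₂.lt_or_eq with h₂ | h₂
  · have : ⌊t * n⌋₊ = q := (Nat.floor_eq_iff (by linarith [q.cast_nonneg (α := ℝ)])).2 ⟨h₁, h₂⟩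
    omega
  · have : ⌊t * n⌋₊ = q + 1 := by rw [h₂]; exact_mod_cast Nat.floor_natCast (q + 1)
    rcases Nat.lt_or_ge (q + 1) n with h | h
    · exact Or.inr ⟨by omega, h₂⟩
    · exact Or.inl (by omega)

lemma curveMap_of_mem_edge (p : Fin (n + 1) → Euc d) {q : ℕ} (hq : q < n) {t : ℝ}
    (h₁ : q / n ≤ t) (h₂ : t ≤ (q + 1) / n) :
    curveMap p t = AffineMap.lineMap (p ⟨q, by omega⟩) (p ⟨q + 1, by omega⟩) (t * n - q) := by
  rw [AffineMap.lineMap_apply_module, curveMap, dif_neg (by omega)]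
  rcases min_floor_eq_of_mem_edge hq h₁ h₂ with h | ⟨h, ht⟩
  · simp only [h]
  · simp only [h]
    push_cast
    simp only [ht, sub_self, add_sub_cancel_left, zero_smul, add_zero, sub_zero, one_smul, zero_add]

lemma arclength_of_mem_edge (p : Fin (n + 1) → Euc d) {q : ℕ} (hq : q < n) {t : ℝ}
    (h₁ : q / n ≤ t) (h₂ : t ≤ (q + 1) / n) :
    arclength p t = ∑ j ∈ Finset.range q, edgeLength p j + (t * n - q) * edgeLength p q := by
  rw [arclength, if_neg (by omega)]
  rcases min_floor_eq_of_mem_edge hq h₁ h₂ with h | ⟨h, ht⟩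
  · simp only [h]
  · simp only [h, Finset.sum_range_succ]
    push_cast
    rw [ht]
    ring

lemma curveMap_vertex (p : Fin (n + 1) → Euc d) (i : Fin (n + 1)) :
    curveMap p ((i : ℕ) / n) = p i := by
  rcases Nat.eq_zero_or_pos n with rfl | hn
  · rw [curveMap, dif_pos rfl, Fin.fin_one_eq_zero i]
  have hn' : (n : ℝ) ≠ 0 := by positivity
  rcases (Nat.lt_succ_iff.1 i.isLt).lt_or_eq with hi | hi
  · rw [curveMap_of_mem_edge p hi le_rfl (by gcongr; linarith), div_mul_cancel₀ _ hn', sub_self,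
      AffineMap.lineMap_apply_zero]
  · have h₁ : ((n - 1 : ℕ) : ℝ) / n ≤ (i : ℕ) / n := by gcongr; omega
    have h₂ : ((i : ℕ) : ℝ) / n ≤ ((n - 1 : ℕ) + 1) / n := by
      gcongr; rw [hi]; exact_mod_cast (show n ≤ n - 1 + 1 by omega)
    rw [curveMap_of_mem_edge p (show n - 1 < n by omega) h₁ h₂, div_mul_cancel₀ _ hn']
    have : ((i : ℕ) : ℝ) - (n - 1 : ℕ) = 1 := by
      rw [hi, Nat.cast_sub (by omega)]; ring
    rw [this, AffineMap.lineMap_apply_one]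
    exact congrArg p (Fin.ext (by simp only; omega))

lemma arclength_zero (p : Fin (n + 1) → Euc d) : arclength p 0 = 0 := by
  simp [arclength]

lemma dist_curveMap_eq_arclength_sub (p : Fin (n + 1) → Euc d) {q : ℕ} (hq : q < n) {x y : ℝ}
    (hx : q / n ≤ x) (hxy : x ≤ y) (hy : y ≤ (q + 1) / n) :
    dist (curveMap p x) (curveMap p y) = arclength p y - arclength p x := by
  rw [curveMap_of_mem_edge p hq hx (hxy.trans hy), curveMap_of_mem_edge p hq (hx.trans hxy) hy,
    arclength_of_mem_edge p hq hx (hxy.trans hy), arclength_of_mem_edge p hq (hx.trans hxy) hy,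
    dist_lineMap_lineMap, Real.dist_eq, abs_of_nonpos (by nlinarith [n.cast_nonneg (α := ℝ)]),
    edgeLength, dif_pos hq]
  ring

/-- As `q` runs over `0, …, n`, these points cut `[τ, τ']` at the vertex parameters of a curve
with `n` edges. -/
def cutPoint (τ τ' : ℝ) (n q : ℕ) : ℝ := min τ' (max τ (q / n))

lemma cutPoint_mono (τ τ' : ℝ) (n : ℕ) : Monotone (cutPoint τ τ' n) := fun q q' h =>
  min_le_min le_rfl (max_le_max le_rfl (div_le_div_of_nonneg_right (by exact_mod_cast h)
    n.cast_nonneg))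

lemma cutPoint_mem {τ τ' : ℝ} (hττ' : τ ≤ τ') (q : ℕ) : cutPoint τ τ' n q ∈ Icc τ τ' :=
  ⟨le_min hττ' (le_max_left _ _), min_le_left _ _⟩

lemma cutPoint_zero {τ τ' : ℝ} (h₀ : 0 ≤ τ) (hττ' : τ ≤ τ') : cutPoint τ τ' n 0 = τ := by
  simp [cutPoint, h₀, hττ']

lemma cutPoint_self {τ τ' : ℝ} (hn : n ≠ 0) (hττ' : τ ≤ τ') (h₁ : τ' ≤ 1) :
    cutPoint τ τ' n n = τ' := by
  simp [cutPoint, div_self (Nat.cast_ne_zero.2 hn : (n : ℝ) ≠ 0), hττ'.trans h₁, h₁]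

lemma cutPoint_succ_eq_or_mem_edge (τ τ' : ℝ) (q : ℕ) :
    cutPoint τ τ' n q = cutPoint τ τ' n (q + 1) ∨
      (q / n ≤ cutPoint τ τ' n q ∧ cutPoint τ τ' n (q + 1) ≤ (q + 1) / n) := by
  have hq : (q : ℝ) / n ≤ (q + 1) / n := by gcongr; linarith
  simp only [cutPoint]
  push_cast
  rcases lt_or_ge τ' (q / n) with h | h
  · left
    rw [min_eq_left (h.le.trans (le_max_right _ _)),
      min_eq_left (h.le.trans (hq.trans (le_max_right _ _)))]
  rcases lt_or_ge (((q : ℝ) + 1) / n) τ with h' | h'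
  · left
    rw [max_eq_left (h'.le.trans' hq), max_eq_left h'.le]
  · right
    exact ⟨le_min h (le_max_right _ _), min_le_of_right_le (max_le h' le_rfl)⟩

lemma arclength_sub_eq_sum_dist (p : Fin (n + 1) → Euc d) {τ τ' : ℝ} (h₀ : 0 ≤ τ)
    (hττ' : τ ≤ τ') (h₁ : τ' ≤ 1) :
    arclength p τ' - arclength p τ =
      ∑ q ∈ Finset.range n,
        dist (curveMap p (cutPoint τ τ' n q)) (curveMap p (cutPoint τ τ' n (q + 1))) := by
  rcases Nat.eq_zero_or_pos n with rfl | hn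
  · simp [arclength]
  have hends : arclength p τ' - arclength p τ =
      arclength p (cutPoint τ τ' n n) - arclength p (cutPoint τ τ' n 0) := by
    rw [cutPoint_zero h₀ hττ', cutPoint_self hn.ne' hττ' h₁]
  rw [hends, ← Finset.sum_range_sub (fun q => arclength p (cutPoint τ τ' n q))]
  refine Finset.sum_congr rfl fun q hq => ?_
  rcases cutPoint_succ_eq_or_mem_edge (n := n) τ τ' q with h | ⟨hl, hr⟩
  · simp [h]
  · exact (dist_curveMap_eq_arclength_sub p (Finset.mem_range.1 hq) hl
      (cutPoint_mono τ τ' n q.le_succ) hr).symm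

lemma dist_curveMap_le_arclength_sub (p : Fin (n + 1) → Euc d) {τ τ' : ℝ} (h₀ : 0 ≤ τ)
    (hττ' : τ ≤ τ') (h₁ : τ' ≤ 1) :
    dist (curveMap p τ) (curveMap p τ') ≤ arclength p τ' - arclength p τ := by
  rcases Nat.eq_zero_or_pos n with rfl | hn
  · simp [curveMap, arclength]
  rw [arclength_sub_eq_sum_dist p h₀ hττ' h₁]
  simpa only [cutPoint_zero h₀ hττ', cutPoint_self hn.ne' hττ' h₁] using
    dist_le_range_sum_dist (fun q => curveMap p (cutPoint τ τ' n q)) n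

lemma dist_curveMap_le_abs_arclength_sub (p : Fin (n + 1) → Euc d) {τ τ' : ℝ}
    (hτ : τ ∈ Icc (0 : ℝ) 1) (hτ' : τ' ∈ Icc (0 : ℝ) 1) :
    dist (curveMap p τ) (curveMap p τ') ≤ |arclength p τ - arclength p τ'| := by
  rcases le_total τ τ' with h | h
  · rw [abs_sub_comm]
    exact (dist_curveMap_le_arclength_sub p hτ.1 h hτ'.2).trans (le_abs_self _)
  · rw [dist_comm]
    exact (dist_curveMap_le_arclength_sub p hτ'.1 h hτ.2).trans (le_abs_self _)

lemma exists_mem_edge (hn : 0 < n) {t : ℝ} (ht : t ∈ Icc (0 : ℝ) 1) :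
    ∃ q < n, q / n ≤ t ∧ t ≤ (q + 1) / n := by
  have hn' : (0 : ℝ) < n := by exact_mod_cast hn
  have htn : 0 ≤ t * n := mul_nonneg ht.1 hn'.le
  refine ⟨min ⌊t * n⌋₊ (n - 1), by omega, ?_, ?_⟩
  · rw [div_le_iff₀ hn']
    exact (Nat.cast_le.2 (min_le_left _ _)).trans (Nat.floor_le htn)
  · rw [le_div_iff₀ hn']
    rcases le_total ⌊t * n⌋₊ (n - 1) with h | h
    · rw [min_eq_left h]; exact (Nat.lt_floor_add_one _).le
    · rw [min_eq_right h, Nat.cast_sub hn]; push_cast; nlinarith [ht.2]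

lemma dist_curveMap_le_of_forall_dist_le {p p' : Fin (n + 1) → Euc d} {c : ℝ}
    (h : ∀ i, dist (p i) (p' i) ≤ c) {t : ℝ} (ht : t ∈ Icc (0 : ℝ) 1) :
    dist (curveMap p t) (curveMap p' t) ≤ c := by
  rcases Nat.eq_zero_or_pos n with rfl | hn
  · simpa [curveMap] using h 0
  obtain ⟨q, hq, h₁, h₂⟩ := exists_mem_edge hn ht
  have hs : t * n - q ∈ Icc (0 : ℝ) 1 := by
    have hn' : (0 : ℝ) < n := by exact_mod_cast hn
    rw [div_le_iff₀ hn'] at h₁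
    rw [le_div_iff₀ hn'] at h₂
    constructor <;> linarith
  rw [curveMap_of_mem_edge p hq h₁ h₂, curveMap_of_mem_edge p' hq h₁ h₂, dist_eq_norm_vsub,
    AffineMap.lineMap_vsub_lineMap, ← mem_closedBall_zero_iff]
  exact (convex_closedBall 0 c).lineMap_mem (by simpa [dist_eq_norm] using h _)
    (by simpa [dist_eq_norm] using h _) hs

lemma norm_curveMap_le (p : Fin (n + 1) → Euc d) {t : ℝ} (ht : t ∈ Icc (0 : ℝ) 1) :
    ‖curveMap p t‖ ≤ ∑ i, ‖p i‖ := by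
  have h₀ : curveMap (fun _ : Fin (n + 1) => (0 : Euc d)) t = 0 := by
    unfold curveMap; split_ifs <;> simp
  have hp : ∀ i, dist (p i) 0 ≤ ∑ i, ‖p i‖ := fun i => by
    rw [dist_zero_right]
    exact Finset.single_le_sum (fun j _ => norm_nonneg (p j)) (Finset.mem_univ i)
  simpa [h₀] using dist_curveMap_le_of_forall_dist_le hp ht

lemma arclength_sub_le_sum_dist_add (p : Fin (n + 1) → Euc d) {τ τ' : ℝ} (h₀ : 0 ≤ τ)
    (hττ' : τ ≤ τ') (h₁ : τ' ≤ 1) (w : ℕ → Euc d) {r : ℝ}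
    (hw : ∀ q, dist (curveMap p (cutPoint τ τ' n q)) (w q) ≤ r) :
    arclength p τ' - arclength p τ ≤ ∑ q ∈ Finset.range n, dist (w q) (w (q + 1)) + 2 * n * r := by
  rw [arclength_sub_eq_sum_dist p h₀ hττ' h₁]
  calc _ ≤ ∑ q ∈ Finset.range n, (dist (w q) (w (q + 1)) + 2 * r) :=
        Finset.sum_le_sum fun q _ => by
          have := dist_triangle4 (curveMap p (cutPoint τ τ' n q)) (w q) (w (q + 1))
            (curveMap p (cutPoint τ τ' n (q + 1)))
          rw [dist_comm (w (q + 1))] at this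
          linarith [hw q, hw (q + 1)]
    _ = _ := by
      rw [Finset.sum_add_distrib, Finset.sum_const, Finset.card_range, nsmul_eq_mul]
      ring

lemma sum_dist_curveMap_le_of_mem_edge (R : Fin (m + 1) → Euc d) (i : Fin m) {s : ℕ → ℝ}
    (hs : Monotone s) (hmem : ∀ q, s q ∈ Icc ((i : ℝ) / m) ((i + 1) / m)) (N : ℕ) :
    ∑ q ∈ Finset.range N, dist (curveMap R (s q)) (curveMap R (s (q + 1)))
      ≤ dist (R i.castSucc) (R i.succ) := by
  have hedge := dist_curveMap_eq_arclength_sub R i.2 le_rfl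
    (div_le_div_of_nonneg_right (le_add_of_nonneg_right zero_le_one) m.cast_nonneg) le_rfl
  have hA : curveMap R (i / m) = R i.castSucc := curveMap_vertex R i.castSucc
  have hB : curveMap R ((i + 1) / m) = R i.succ := by
    simpa using curveMap_vertex R i.succ
  rw [hA, hB] at hedge
  rw [Finset.sum_congr rfl fun q _ => dist_curveMap_eq_arclength_sub R i.2 (hmem q).1
    (hs q.le_succ) (hmem (q + 1)).2, Finset.sum_range_sub (fun q => arclength R (s q)), hedge]
  have h₀ := dist_curveMap_eq_arclength_sub R i.2 le_rfl (hmem 0).1 (hmem 0).2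
  have hN := dist_curveMap_eq_arclength_sub R i.2 (hmem N).1 (hmem N).2 le_rfl
  linarith [dist_nonneg (x := curveMap R (i / m)) (y := curveMap R (s 0)),
    dist_nonneg (x := curveMap R (s N)) (y := curveMap R ((i + 1) / m))]

end Polygonal

section Frechet

variable {d : ℕ}

lemma IsRepar.mapsTo {f : ℝ → ℝ} (hf : IsRepar f) {t : ℝ} (ht : t ∈ Icc (0 : ℝ) 1) :
    f t ∈ Icc (0 : ℝ) 1 :=
  hf.2.2 ▸ mem_image_of_mem f ht

lemma IsRepar.map_zero {f : ℝ → ℝ} (hf : IsRepar f) : f 0 = 0 := by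
  have h₀ : (0 : ℝ) ∈ Icc (0 : ℝ) 1 := left_mem_Icc.2 zero_le_one
  obtain ⟨t, ht, hft⟩ : (0 : ℝ) ∈ f '' Icc 0 1 := by rw [hf.2.2]; exact h₀
  exact le_antisymm ((hf.2.1 h₀ ht ht.1).trans_eq hft) (hf.mapsTo h₀).1

lemma IsRepar.map_one {f : ℝ → ℝ} (hf : IsRepar f) : f 1 = 1 := by
  have h₁ : (1 : ℝ) ∈ Icc (0 : ℝ) 1 := right_mem_Icc.2 zero_le_one
  obtain ⟨t, ht, hft⟩ : (1 : ℝ) ∈ f '' Icc 0 1 := by rw [hf.2.2]; exact h₁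
  exact le_antisymm (hf.mapsTo h₁).2 (hft.symm.trans_le (hf.2.1 ht h₁ ht.2))

lemma isRepar_id : IsRepar id :=
  ⟨continuousOn_id, monotoneOn_id, image_id _⟩

structure IsMatching (X Y : ℝ → Euc d) (r : ℝ) (f g : ℝ → ℝ) : Prop where
  isRepar_left : IsRepar f
  isRepar_right : IsRepar g
  dist_le : ∀ t ∈ Icc (0 : ℝ) 1, dist (X (f t)) (Y (g t)) ≤ r

lemma frechetDist_eq_sInf (X Y : ℝ → Euc d) :
    frechetDist X Y = sInf {r | ∃ f g, IsMatching X Y r f g} := by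
  rw [frechetDist]
  congr 1
  ext r
  exact ⟨fun ⟨f, g, hf, hg, h⟩ => ⟨f, g, hf, hg, h⟩, fun ⟨f, g, h⟩ => ⟨f, g, h.1, h.2, h.3⟩⟩

lemma IsMatching.frechetDist_le {X Y : ℝ → Euc d} {r : ℝ} {f g : ℝ → ℝ}
    (h : IsMatching X Y r f g) : frechetDist X Y ≤ r := by
  rw [frechetDist_eq_sInf]
  refine csInf_le ⟨0, ?_⟩ ⟨f, g, h⟩
  rintro s ⟨f', g', h'⟩
  exact dist_nonneg.trans (h'.dist_le 0 (left_mem_Icc.2 zero_le_one))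

lemma frechetDist_curveMap_le_of_forall_dist_le {m : ℕ} {R R' : Fin (m + 1) → Euc d} {c : ℝ}
    (h : ∀ i, dist (R i) (R' i) ≤ c) : frechetDist (curveMap R) (curveMap R') ≤ c :=
  IsMatching.frechetDist_le (f := id) (g := id)
    ⟨isRepar_id, isRepar_id, fun _ ht => dist_curveMap_le_of_forall_dist_le h ht⟩

lemma exists_isMatching_of_frechetDist_lt {n m : ℕ} (P : Fin (n + 1) → Euc d)
    (R : Fin (m + 1) → Euc d) {r : ℝ} (h : frechetDist (curveMap P) (curveMap R) < r) :
    ∃ f g, IsMatching (curveMap P) (curveMap R) r f g := by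
  have hne : {r | ∃ f g, IsMatching (curveMap P) (curveMap R) r f g}.Nonempty :=
    ⟨_, id, id, isRepar_id, isRepar_id, fun _ ht => (dist_le_norm_add_norm _ _).trans
      (add_le_add (norm_curveMap_le P ht) (norm_curveMap_le R ht))⟩
  rw [frechetDist_eq_sInf] at h
  obtain ⟨s, ⟨f, g, hfg⟩, hs⟩ := exists_lt_of_csInf_lt hne h
  exact ⟨f, g, hfg.isRepar_left, hfg.isRepar_right, fun t ht => (hfg.dist_le t ht).trans hs.le⟩

end Frechet

section FirstHit

variable {F : ℝ → ℝ} {a b y y' : ℝ}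

def firstHit (F : ℝ → ℝ) (a b y : ℝ) : ℝ := sInf {t | t ∈ Icc a b ∧ y ≤ F t}

lemma firstHit_mem_and_eq (hF : ContinuousOn F (Icc a b)) (hab : a ≤ b) (ha : F a ≤ y)
    (hb : y ≤ F b) : firstHit F a b y ∈ Icc a b ∧ F (firstHit F a b y) = y := by
  set S := {t | t ∈ Icc a b ∧ y ≤ F t}
  have hbdd : BddBelow S := ⟨a, fun t ht => ht.1.1⟩
  have hS : IsClosed S := hF.preimage_isClosed_of_isClosed isClosed_Icc isClosed_Ici
  have hmem : firstHit F a b y ∈ S := hS.csInf_mem ⟨b, ⟨hab, le_rfl⟩, hb⟩ hbdd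
  refine ⟨hmem.1, le_antisymm ?_ hmem.2⟩
  by_contra! hlt
  obtain ⟨t, ht, hFt⟩ : y ∈ F '' Icc a (firstHit F a b y) :=
    intermediate_value_Icc hmem.1.1 (hF.mono (Icc_subset_Icc_right hmem.1.2)) ⟨ha, hlt.le⟩
  have : firstHit F a b y ≤ t := csInf_le hbdd ⟨⟨ht.1, ht.2.trans hmem.1.2⟩, hFt.ge⟩
  rw [le_antisymm ht.2 this] at hFt
  exact hlt.ne hFt.symm

lemma firstHit_mono (hab : a ≤ b) (hyy' : y ≤ y') (hb : y' ≤ F b) :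
    firstHit F a b y ≤ firstHit F a b y' :=
  csInf_le_csInf ⟨a, fun _ ht => ht.1.1⟩ ⟨b, ⟨hab, le_rfl⟩, hb⟩
    fun _ ht => ⟨ht.1, hyy'.trans ht.2⟩

lemma firstHit_eq_left (hab : a ≤ b) (ha : y ≤ F a) : firstHit F a b y = a :=
  IsLeast.csInf_eq ⟨⟨⟨le_rfl, hab⟩, ha⟩, fun _ ht => ht.1.1⟩

end FirstHit

section Anchor

variable {d n m : ℕ} {P : Fin (n + 1) → Euc d} {R : Fin (m + 1) → Euc d} {r : ℝ}
  {f g : ℝ → ℝ}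

def vertexTime (g : ℝ → ℝ) (m i : ℕ) : ℝ := firstHit g 0 1 (i / m)

def anchor (f g : ℝ → ℝ) (m i : ℕ) : ℝ := f (vertexTime g m i)

lemma IsRepar.vertexTime_mem_and_eq (hg : IsRepar g) {i : ℕ} (hi : i ≤ m) :
    vertexTime g m i ∈ Icc (0 : ℝ) 1 ∧ g (vertexTime g m i) = i / m :=
  firstHit_mem_and_eq hg.1 zero_le_one (by rw [hg.map_zero]; positivity)
    (by rw [hg.map_one]; exact div_le_one_of_le₀ (by exact_mod_cast hi) m.cast_nonneg)

lemma IsRepar.vertexTime_mono (hg : IsRepar g) {i j : ℕ} (hij : i ≤ j) (hj : j ≤ m) :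
    vertexTime g m i ≤ vertexTime g m j :=
  firstHit_mono zero_le_one (div_le_div_of_nonneg_right (by exact_mod_cast hij) m.cast_nonneg)
    (by rw [hg.map_one]; exact div_le_one_of_le₀ (by exact_mod_cast hj) m.cast_nonneg)

namespace IsMatching

lemma anchor_zero (h : IsMatching (curveMap P) (curveMap R) r f g) : anchor f g m 0 = 0 := by
  rw [anchor, vertexTime, firstHit_eq_left zero_le_one (by simp [h.isRepar_right.map_zero]),
    h.isRepar_left.map_zero]

lemma anchor_mem (h : IsMatching (curveMap P) (curveMap R) r f g) {i : ℕ} (hi : i ≤ m) :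
    anchor f g m i ∈ Icc (0 : ℝ) 1 :=
  h.isRepar_left.mapsTo (h.isRepar_right.vertexTime_mem_and_eq hi).1

lemma dist_anchor_le (h : IsMatching (curveMap P) (curveMap R) r f g) (i : Fin (m + 1)) :
    dist (curveMap P (anchor f g m i)) (R i) ≤ r := by
  obtain ⟨hmem, hval⟩ := h.isRepar_right.vertexTime_mem_and_eq i.is_le
  simpa only [anchor, hval, curveMap_vertex] using h.dist_le _ hmem

lemma arclength_anchor_succ_ge (h : IsMatching (curveMap P) (curveMap R) r f g) (i : Fin m) :
    dist (R i.castSucc) (R i.succ) - 2 * r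
      ≤ arclength P (anchor f g m (i + 1)) - arclength P (anchor f g m i) := by
  have hmono : anchor f g m i ≤ anchor f g m (i + 1) :=
    h.isRepar_left.2.1 (h.isRepar_right.vertexTime_mem_and_eq i.castSucc.is_le).1
      (h.isRepar_right.vertexTime_mem_and_eq i.succ.is_le).1
      (h.isRepar_right.vertexTime_mono (Nat.le_succ _) i.succ.is_le)
  have hP := dist_curveMap_le_arclength_sub P (h.anchor_mem i.castSucc.is_le).1 hmono
    (h.anchor_mem i.succ.is_le).2
  have h₁ := h.dist_anchor_le i.castSucc
  have h₂ := h.dist_anchor_le i.succ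
  simp only [Fin.val_castSucc, Fin.val_succ] at hP h₁ h₂
  rw [dist_comm] at h₁
  linarith [dist_triangle4 (R i.castSucc) (curveMap P (anchor f g m i))
    (curveMap P (anchor f g m (i + 1))) (R i.succ)]

lemma arclength_anchor_succ_le (h : IsMatching (curveMap P) (curveMap R) r f g) (i : Fin m) :
    arclength P (anchor f g m (i + 1)) - arclength P (anchor f g m i)
      ≤ dist (R i.castSucc) (R i.succ) + 2 * n * r := by
  have hf := h.isRepar_left
  have hg := h.isRepar_right
  obtain ⟨ht₁, hgt₁⟩ := hg.vertexTime_mem_and_eq i.castSucc.is_le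
  obtain ⟨ht₂, hgt₂⟩ := hg.vertexTime_mem_and_eq i.succ.is_le
  simp only [Fin.val_castSucc, Fin.val_succ, Nat.cast_add, Nat.cast_one] at ht₁ hgt₁ ht₂ hgt₂
  set t₁ := vertexTime g m i
  set t₂ := vertexTime g m (i + 1)
  have ht : t₁ ≤ t₂ := hg.vertexTime_mono (Nat.le_succ _) i.succ.is_le
  have hτ : f t₁ ≤ f t₂ := hf.2.1 ht₁ ht₂ ht
  have hsub : Icc t₁ t₂ ⊆ Icc 0 1 := Icc_subset_Icc ht₁.1 ht₂.2
  -- pull the cut points of `P` back to times in `[t₁, t₂]`, where `R` runs along its edge `i`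
  set u : ℕ → ℝ := fun q => firstHit f t₁ t₂ (cutPoint (f t₁) (f t₂) n q)
  have hu : ∀ q, u q ∈ Icc t₁ t₂ ∧ f (u q) = cutPoint (f t₁) (f t₂) n q := fun q =>
    firstHit_mem_and_eq (hf.1.mono hsub) ht (cutPoint_mem hτ q).1 (cutPoint_mem hτ q).2
  have hgu_mono : Monotone (g ∘ u) := fun q q' hqq' =>
    hg.2.1 (hsub (hu q).1) (hsub (hu q').1)
      (firstHit_mono ht (cutPoint_mono _ _ n hqq') (cutPoint_mem hτ q').2)
  have hgu : ∀ q, g (u q) ∈ Icc ((i : ℝ) / m) ((i + 1) / m) := fun q =>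
    ⟨hgt₁ ▸ hg.2.1 ht₁ (hsub (hu q).1) (hu q).1.1, hgt₂ ▸ hg.2.1 (hsub (hu q).1) ht₂ (hu q).1.2⟩
  have hclose : ∀ q, dist (curveMap P (cutPoint (f t₁) (f t₂) n q)) (curveMap R (g (u q))) ≤ r :=
    fun q => (hu q).2 ▸ h.dist_le _ (hsub (hu q).1)
  calc arclength P (f t₂) - arclength P (f t₁)
      ≤ ∑ q ∈ Finset.range n, dist (curveMap R (g (u q))) (curveMap R (g (u (q + 1))))
          + 2 * n * r :=
        arclength_sub_le_sum_dist_add P (hf.mapsTo ht₁).1 hτ (hf.mapsTo ht₂).2 _ hclose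
    _ ≤ dist (R i.castSucc) (R i.succ) + 2 * n * r := by
        gcongr
        exact sum_dist_curveMap_le_of_mem_edge R i hgu_mono hgu n

end IsMatching

end Anchor

lemma Int.floor_div_add_floor_div_le {a b L h : ℝ} (hh : 0 < h) {c : ℕ}
    (hab : a + L ≤ b + c * h) : ⌊a / h⌋ + ⌊L / h⌋ ≤ ⌊b / h⌋ + c := by
  have : a / h + L / h ≤ b / h + c := by
    simpa [add_div, hh.ne'] using div_le_div_of_nonneg_right hab hh.le
  calc ⌊a / h⌋ + ⌊L / h⌋ ≤ ⌊a / h + L / h⌋ := Int.le_floor_add _ _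
    _ ≤ ⌊b / h + c⌋ := Int.floor_mono this
    _ = ⌊b / h⌋ + c := Int.floor_add_natCast _ _

lemma Int.floor_div_le_floor_div_add_floor_div {a b L h : ℝ} (hh : 0 < h) {C : ℕ}
    (hab : b ≤ a + L + C * h) : ⌊b / h⌋ ≤ ⌊a / h⌋ + ⌊L / h⌋ + C + 1 := by
  have : b / h ≤ a / h + L / h + C := by
    simpa [add_div, hh.ne'] using div_le_div_of_nonneg_right hab hh.le
  calc ⌊b / h⌋ ≤ ⌊a / h + L / h + C⌋ := Int.floor_mono this
    _ = ⌊a / h + L / h⌋ + C := Int.floor_add_natCast _ _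
    _ ≤ ⌊a / h⌋ + ⌊L / h⌋ + C + 1 := by linarith [Int.le_floor_add_floor (a / h) (L / h)]

lemma dist_le_of_dist_sub_le {E : Type*} [SeminormedAddCommGroup E] {x x' p p' y : E} {r s : ℝ}
    (h : dist (x - p) y ≤ r) (h' : dist (x' - p') y ≤ r) (hp : dist p p' ≤ s) :
    dist x x' ≤ 2 * r + s :=
  calc dist x x' = dist (x - p + p) (x' - p' + p') := by simp only [sub_add_cancel]
    _ ≤ dist (x - p) (x' - p') + dist p p' := dist_add_add_le _ _ _ _
    _ ≤ 2 * r + s := by linarith [dist_triangle_right (x - p) (x' - p') y]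

lemma IsMuEpsEdges.exists_fin_mul_eq_dist {d n μ : ℕ} {ε : ℝ} {p : Fin (n + 1) → Euc d}
    (hp : IsMuEpsEdges p μ ε) (hε : 0 < ε) (i : Fin n) :
    ∃ ℓ : Fin (μ + 1), (ℓ : ℕ) * ε = dist (p i.castSucc) (p i.succ) := by
  obtain ⟨⟨ℓ, hℓ⟩, hμ⟩ := hp i
  rw [hℓ] at hμ
  exact ⟨⟨ℓ, Nat.lt_succ_of_le (by exact_mod_cast le_of_mul_le_mul_right hμ hε)⟩, hℓ.symm⟩

section Code

variable {d n m m' k μ : ℕ} {P : Fin (n + 1) → Euc d} {ε Δ : ℝ} {f g : ℝ → ℝ}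
  {net : Finset (Euc d)}

def anchorRank (P : Fin (n + 1) → Euc d) (Δ : ℝ) (f g : ℝ → ℝ) (m i : ℕ) : ℤ :=
  ⌊arclength P (anchor f g m i) / (Δ / 4)⌋

lemma dist_curveMap_le_of_floor_arclength_div_eq (p : Fin (n + 1) → Euc d) {τ τ' h : ℝ}
    (hτ : τ ∈ Icc (0 : ℝ) 1) (hτ' : τ' ∈ Icc (0 : ℝ) 1) (hh : 0 < h)
    (he : ⌊arclength p τ / h⌋ = ⌊arclength p τ' / h⌋) :
    dist (curveMap p τ) (curveMap p τ') ≤ h := by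
  have := Int.abs_sub_lt_one_of_floor_eq_floor he
  rw [← sub_div, abs_div, abs_of_pos hh, div_lt_one hh] at this
  exact (dist_curveMap_le_abs_arclength_sub p hτ hτ').trans this.le

lemma IsMatching.anchorRank_succ_bounds {R : Fin (m + 1) → Euc d}
    (h : IsMatching (curveMap P) (curveMap R) (2 * Δ) f g) (hΔ : 0 < Δ) (i : Fin m) :
    anchorRank P Δ f g m i + ⌊dist (R i.castSucc) (R i.succ) / (Δ / 4)⌋
        ≤ anchorRank P Δ f g m (i + 1) + 16 ∧
      anchorRank P Δ f g m (i + 1)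
        ≤ anchorRank P Δ f g m i + ⌊dist (R i.castSucc) (R i.succ) / (Δ / 4)⌋ + (16 * n : ℕ) + 1 :=
  ⟨Int.floor_div_add_floor_div_le (by positivity)
      (by push_cast; linarith [h.arclength_anchor_succ_ge i]),
    Int.floor_div_le_floor_div_add_floor_div (by positivity)
      (by push_cast; linarith [h.arclength_anchor_succ_le i])⟩

/-- Codes for curves near `P` with at most `k` vertices: the number of edges, and for each index
`j` the length of edge `j` in units of `ε`, the jump of `anchorRank` across edge `j` minus the
rank of its length (shifted by `16` to make it non-negative), and a net point close to the
offset of vertex `j` from its anchor. -/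
abbrev CurveCode (k μ : ℕ) (net : Finset (Euc d)) : Type :=
  Fin k × (Fin k → Fin (μ + 1) × Fin (18 * k) × net)

structure HasCurveCode (P : Fin (n + 1) → Euc d) (ε Δ : ℝ) (R : Fin (m + 1) → Euc d)
    (c : CurveCode k μ net) : Prop where
  numEdges_eq : (c.1 : ℕ) = m
  exists_matching : ∃ f g, IsMatching (curveMap P) (curveMap R) (2 * Δ) f g ∧
    (∀ j : Fin k, (j : ℕ) < m → anchorRank P Δ f g m (j + 1) + 16 =
      anchorRank P Δ f g m j + ⌊((c.2 j).1 : ℕ) * ε / (Δ / 4)⌋ + ((c.2 j).2.1 : ℕ)) ∧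
    ∀ j : Fin k, ∀ hj : (j : ℕ) ≤ m,
      dist (R ⟨j, Nat.lt_succ_of_le hj⟩ - curveMap P (anchor f g m j)) ((c.2 j).2.2 : Euc d) ≤ Δ / 8

theorem HasCurveCode.frechetDist_le {c : CurveCode k μ net} {R : Fin (m + 1) → Euc d}
    {R' : Fin (m' + 1) → Euc d} (hΔ : 0 < Δ) (hR : HasCurveCode P ε Δ R c)
    (hR' : HasCurveCode P ε Δ R' c) : frechetDist (curveMap R) (curveMap R') ≤ Δ / 2 := by
  obtain rfl : m = m' := hR.numEdges_eq.symm.trans hR'.numEdges_eq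
  have hmk : m < k := hR.numEdges_eq ▸ c.1.2
  obtain ⟨f, g, hM, hrank, hlat⟩ := hR.exists_matching
  obtain ⟨f', g', hM', hrank', hlat'⟩ := hR'.exists_matching
  -- the rank jumps are read off the code, so the ranks agree by induction along the vertices
  have hrank_eq : ∀ j ≤ m, anchorRank P Δ f g m j = anchorRank P Δ f' g' m j := by
    intro j hj
    induction j with
    | zero => simp [anchorRank, hM.anchor_zero, hM'.anchor_zero, arclength_zero]
    | succ j ih =>
      linarith [hrank ⟨j, by omega⟩ hj, hrank' ⟨j, by omega⟩ hj, ih (by omega)]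
  refine frechetDist_curveMap_le_of_forall_dist_le fun i => ?_
  have hP := dist_curveMap_le_of_floor_arclength_div_eq P (hM.anchor_mem i.is_le)
    (hM'.anchor_mem i.is_le) (by positivity) (hrank_eq i i.is_le)
  linarith [dist_le_of_dist_sub_le (hlat ⟨i, by omega⟩ i.is_le) (hlat' ⟨i, by omega⟩ i.is_le) hP]

theorem exists_hasCurveCode (hε : 0 < ε) (hΔ : 0 < Δ) (hnk : n + 1 ≤ k)
    (hnet : ∀ w : Euc d, ‖w‖ ≤ 2 * Δ → ∃ y ∈ net, dist w y ≤ Δ / 8)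
    {R : Fin (m + 1) → Euc d} (hmk : m + 1 ≤ k) (hR : IsMuEpsEdges R μ ε)
    (hPR : frechetDist (curveMap P) (curveMap R) ≤ Δ) :
    ∃ c : CurveCode k μ net, HasCurveCode P ε Δ R c := by
  obtain ⟨f, g, hM⟩ := exists_isMatching_of_frechetDist_lt P R (r := 2 * Δ) (by linarith)
  have hedge : ∀ j : Fin k, ∃ (ℓ : Fin (μ + 1)) (o : Fin (18 * k)), (j : ℕ) < m →
      anchorRank P Δ f g m (j + 1) + 16 =
        anchorRank P Δ f g m j + ⌊(ℓ : ℕ) * ε / (Δ / 4)⌋ + (o : ℕ) := by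
    intro j
    by_cases hj : (j : ℕ) < m
    · obtain ⟨ℓ, hℓ⟩ := hR.exists_fin_mul_eq_dist hε ⟨j, hj⟩
      obtain ⟨h₁, h₂⟩ := hM.anchorRank_succ_bounds hΔ ⟨j, hj⟩
      simp only at h₁ h₂
      rw [← hℓ] at h₁ h₂
      refine ⟨ℓ, ⟨(anchorRank P Δ f g m (j + 1) + 16 - anchorRank P Δ f g m j
        - ⌊(ℓ : ℕ) * ε / (Δ / 4)⌋).toNat, by omega⟩, fun _ => by simp only; omega⟩
    · exact ⟨0, ⟨0, by omega⟩, fun h => absurd h hj⟩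
  have hvertex : ∀ j : Fin k, ∃ y : net, ∀ hj : (j : ℕ) ≤ m,
      dist (R ⟨j, Nat.lt_succ_of_le hj⟩ - curveMap P (anchor f g m j)) (y : Euc d) ≤ Δ / 8 := by
    intro j
    by_cases hj : (j : ℕ) ≤ m
    · obtain ⟨y, hy, hdist⟩ := hnet (R ⟨j, Nat.lt_succ_of_le hj⟩ - curveMap P (anchor f g m j))
        (by rw [← dist_eq_norm, dist_comm]; exact hM.dist_anchor_le ⟨j, Nat.lt_succ_of_le hj⟩)
      exact ⟨⟨y, hy⟩, fun _ => hdist⟩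
    · obtain ⟨y, hy, -⟩ := hnet 0 (by simp only [norm_zero]; positivity)
      exact ⟨⟨y, hy⟩, fun h => absurd h hj⟩
  choose ℓ o hℓo using hedge
  choose y hy using hvertex
  exact ⟨(⟨m, by omega⟩, fun j => (ℓ j, o j, y j)), rfl, f, g, hM, hℓo, hy⟩

lemma card_curveCode_le (hd : 1 ≤ d) (hμ : 1 ≤ μ) (hnet : net.card ≤ 625 ^ d) :
    Fintype.card (CurveCode k μ net) ≤ (2 ^ (17 * d) * k * μ) ^ k := by
  have hcard : Fintype.card (CurveCode k μ net) = k * ((μ + 1) * (18 * k * net.card)) ^ k := by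
    simp [Fintype.card_prod, Fintype.card_coe]
  have h72 : 72 * 625 ^ d ≤ 2 ^ (17 * d) :=
    calc 72 * 625 ^ d ≤ 2 ^ (7 * d) * 1024 ^ d := Nat.mul_le_mul
          ((show 72 ≤ 2 ^ 7 by norm_num).trans (Nat.pow_le_pow_right two_pos (by omega)))
          (Nat.pow_le_pow_left (by norm_num) d)
      _ = 2 ^ (17 * d) := by rw [show 1024 = 2 ^ 10 by norm_num, ← pow_mul, ← pow_add]; ring_nf
  rw [hcard]
  calc k * ((μ + 1) * (18 * k * net.card)) ^ k
      ≤ 2 ^ k * ((2 * μ) * (18 * k * 625 ^ d)) ^ k :=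
        Nat.mul_le_mul Nat.lt_two_pow_self.le (Nat.pow_le_pow_left (by gcongr; omega) k)
    _ = (72 * 625 ^ d * k * μ) ^ k := by rw [← mul_pow]; ring_nf
    _ ≤ (2 ^ (17 * d) * k * μ) ^ k := by gcongr

end Code

section Net

variable {E : Type*} [NormedAddCommGroup E] [NormedSpace ℝ E] [FiniteDimensional ℝ E]

lemma card_le_of_subset_closedBall_of_separated (s : Finset E) {x : E} {r : ℝ} (hr : 0 < r)
    (hs : ↑s ⊆ closedBall x r) (hsep : ∀ a ∈ s, ∀ b ∈ s, a ≠ b → r / 2 ≤ dist a b) :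
    s.card ≤ 5 ^ Module.finrank ℝ E := by
  classical
  set φ : E → E := fun u => (2 / r) • (u - x)
  have hφ : Function.Injective φ := fun a b hab =>
    sub_left_injective (smul_right_injective E (by positivity : 2 / r ≠ 0) hab)
  have hdist : ∀ a b, ‖φ a - φ b‖ = 2 / r * dist a b := fun a b => by
    rw [← smul_sub, sub_sub_sub_cancel_right, norm_smul, Real.norm_of_nonneg (by positivity),
      dist_eq_norm]
  rw [← Finset.card_image_of_injective s hφ]
  refine Besicovitch.card_le_of_separated _ ?_ ?_
  · simp only [Finset.mem_image]
    rintro _ ⟨u, hu, rfl⟩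
    have : dist u x ≤ r := hs hu
    simpa [φ, hdist u x] using (show ‖φ u - φ x‖ ≤ 2 by
      rw [hdist]; calc 2 / r * dist u x ≤ 2 / r * r := by gcongr
        _ = 2 := by field_simp)
  · simp only [Finset.mem_image]
    rintro _ ⟨u, hu, rfl⟩ _ ⟨v, hv, rfl⟩ huv
    rw [hdist]
    calc (1 : ℝ) = 2 / r * (r / 2) := by field_simp
      _ ≤ 2 / r * dist u v := by gcongr; exact hsep u hu v hv (fun h => huv (h ▸ rfl))

/-- A maximal `r/2`-separated subset of the ball is an `r/2`-net of it. -/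
lemma exists_finset_card_le_forall_closedBall_exists_dist_le_half (x : E) {r : ℝ} (hr : 0 < r) :
    ∃ t : Finset E, t.card ≤ 5 ^ Module.finrank ℝ E ∧
      ∀ z ∈ closedBall x r, ∃ y ∈ t, dist z y ≤ r / 2 := by
  classical
  set C : Set ℕ := {N | ∃ s : Finset E, ↑s ⊆ closedBall x r ∧
    (∀ a ∈ s, ∀ b ∈ s, a ≠ b → r / 2 ≤ dist a b) ∧ s.card = N}
  have hbdd : BddAbove C := ⟨5 ^ Module.finrank ℝ E, by
    rintro N ⟨s, hs, hsep, rfl⟩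
    exact card_le_of_subset_closedBall_of_separated s hr hs hsep⟩
  have hne : C.Nonempty := ⟨0, ∅, by simp⟩
  obtain ⟨s, hs, hsep, hcard⟩ := Nat.sSup_mem hne hbdd
  refine ⟨s, card_le_of_subset_closedBall_of_separated s hr hs hsep, fun z hz => ?_⟩
  by_contra! hfar
  have hzs : z ∉ s := fun hzs => by linarith [hfar z hzs, dist_self z]
  have : (insert z s).card ∈ C := ⟨insert z s, by
    simpa [Set.insert_subset_iff] using ⟨hz, hs⟩, by
    simp only [Finset.mem_insert]
    rintro a (rfl | ha) b (rfl | hb) hab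
    · exact absurd rfl hab
    · exact (hfar b hb).le
    · exact dist_comm a b ▸ (hfar a ha).le
    · exact hsep a ha b hb hab, rfl⟩
  have := le_csSup hbdd this
  rw [Finset.card_insert_of_notMem hzs, hcard] at this
  omega

lemma exists_finset_card_le_forall_closedBall_exists_dist_le_div_pow (j : ℕ) (x : E) {r : ℝ}
    (hr : 0 < r) : ∃ t : Finset E, t.card ≤ (5 ^ Module.finrank ℝ E) ^ j ∧
      ∀ z ∈ closedBall x r, ∃ y ∈ t, dist z y ≤ r / 2 ^ j := by
  induction j with
  | zero => exact ⟨{x}, by simp, fun z hz => ⟨x, by simp, by simpa using hz⟩⟩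
  | succ j ih =>
    classical
    obtain ⟨t, htcard, ht⟩ := ih
    choose F hFcard hF using fun y : E =>
      exists_finset_card_le_forall_closedBall_exists_dist_le_half y (by positivity : 0 < r / 2 ^ j)
    refine ⟨t.biUnion F, ?_, fun z hz => ?_⟩
    · calc (t.biUnion F).card ≤ ∑ y ∈ t, (F y).card := Finset.card_biUnion_le
        _ ≤ t.card * 5 ^ Module.finrank ℝ E := by
          simpa using Finset.sum_le_sum fun y (_ : y ∈ t) => hFcard y
        _ ≤ (5 ^ Module.finrank ℝ E) ^ (j + 1) := by rw [pow_succ]; gcongr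
    · obtain ⟨y, hy, hzy⟩ := ht z hz
      obtain ⟨w, hw, hzw⟩ := hF y z hzy
      exact ⟨w, Finset.mem_biUnion.2 ⟨y, hy, hw⟩, hzw.trans_eq (by rw [pow_succ]; ring)⟩

end Net

lemma exists_finset_euc_card_le_forall_norm_le_exists_dist_le {d : ℕ} {Δ : ℝ} (hΔ : 0 < Δ) :
    ∃ net : Finset (Euc d), net.card ≤ 625 ^ d ∧
      ∀ w : Euc d, ‖w‖ ≤ 2 * Δ → ∃ y ∈ net, dist w y ≤ Δ / 8 := by
  obtain ⟨net, hcard, hnet⟩ :=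
    exists_finset_card_le_forall_closedBall_exists_dist_le_div_pow 4 (0 : Euc d)
      (by positivity : 0 < 2 * Δ)
  refine ⟨net, ?_, fun w hw => ?_⟩
  · rwa [finrank_euclideanSpace_fin, ← pow_mul, mul_comm, pow_mul] at hcard
  · obtain ⟨y, hy, hwy⟩ := hnet w (mem_closedBall_zero_iff.2 hw)
    exact ⟨y, hy, hwy.trans_eq (by ring)⟩

lemma exists_fin_cover_of_classes {α β : Type*} [Fintype β] (S : α → Prop) (G : β → α → Prop)
    (D : α → α → Prop) (hG : ∀ b x y, G b x → G b y → D x y) :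
    ∃ (M : ℕ) (Q : Fin M → α), M ≤ Fintype.card β ∧ (∀ i, S (Q i)) ∧
      ∀ x b, S x → G b x → ∃ i, D x (Q i) := by
  classical
  let B := {b : β // ∃ y, S y ∧ G b y}
  choose Q hQ using fun b : B => b.2
  refine ⟨Fintype.card B, fun i => Q ((Fintype.equivFin B).symm i), Fintype.card_subtype_le _,
    fun i => (hQ _).1, fun x b hx hb => ⟨Fintype.equivFin B ⟨b, x, hx, hb⟩, ?_⟩⟩
  simp only [Equiv.symm_apply_apply]
  exact hG b x _ hb (hQ ⟨b, x, hx, hb⟩).2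

/-- Theorem 3.6 of the paper. There is a universal constant `C₀ ≥ 1` such
that every Fréchet ball of radius `Δ` centered at a `(μ,ε)`-curve of complexity at most `k`
in `ℝ^d` can be covered by at most `(C₀^d·k·μ)^k` Fréchet balls of radius `Δ/2` centered at
`(μ,ε)`-curves; hence the doubling dimension of this space is `O(k(d + log(kμ)))`. -/
theorem doubling_bound :
    ∃ C₀ : ℝ, 1 ≤ C₀ ∧
      ∀ (d k μ : ℕ), 1 ≤ d → 1 ≤ k → 1 ≤ μ →
      ∀ ε : ℝ, 0 < ε →
      ∀ (n : ℕ) (P : Fin (n + 1) → Euc d), n + 1 ≤ k → IsMuEpsEdges P μ ε →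
      ∀ Δ : ℝ, 0 < Δ →
      ∃ (M : ℕ) (Q : Fin M → Σ m : ℕ, Fin (m + 1) → Euc d),
        (M : ℝ) ≤ (C₀ ^ d * k * μ) ^ k ∧
        (∀ i, (Q i).1 + 1 ≤ k ∧ IsMuEpsEdges (Q i).2 μ ε) ∧
        ∀ (m : ℕ) (R : Fin (m + 1) → Euc d), m + 1 ≤ k → IsMuEpsEdges R μ ε →
          frechetDist (curveMap P) (curveMap R) ≤ Δ →
          ∃ i, frechetDist (curveMap R) (curveMap (Q i).2) ≤ Δ / 2 := by
  refine ⟨2 ^ 17, by norm_num, fun d k μ hd _ hμ ε hε n P hnk _ Δ hΔ => ?_⟩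
  obtain ⟨net, hnetcard, hnet⟩ := exists_finset_euc_card_le_forall_norm_le_exists_dist_le hΔ
  obtain ⟨M, Q, hM, hQ, hcover⟩ := exists_fin_cover_of_classes (β := CurveCode k μ net)
    (fun x : Σ m : ℕ, Fin (m + 1) → Euc d => x.1 + 1 ≤ k ∧ IsMuEpsEdges x.2 μ ε)
    (fun c x => HasCurveCode P ε Δ x.2 c)
    (fun x y => frechetDist (curveMap x.2) (curveMap y.2) ≤ Δ / 2)
    (fun _ _ _ hx hy => hx.frechetDist_le hΔ hy)
  refine ⟨M, Q, ?_, hQ, fun m R hmk hR hPR => ?_⟩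
  · have : M ≤ (2 ^ (17 * d) * k * μ) ^ k := hM.trans (card_curveCode_le hd hμ hnetcard)
    calc (M : ℝ) ≤ ((2 ^ (17 * d) * k * μ) ^ k : ℕ) := by exact_mod_cast this
      _ = ((2 ^ 17) ^ d * k * μ) ^ k := by push_cast; rw [pow_mul]
  · obtain ⟨c, hc⟩ := exists_hasCurveCode hε hΔ hnk hnet hmk hR hPR
    exact hcover ⟨m, R⟩ c ⟨hmk, hR⟩ hc
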